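/- arXiv:2509.17139 — 2 statements merged into one kernel-verified Lean document; each statement's English description precedes it below -/
import Mathlib

section
/- Let R ⊆ k[[t]] be a k-subalgebra with 𝔪 = R ∩ t·k[[t]], t^{c_R}·k[[t]] ⊆ R, Herzog–Kunz set {a₁ < … < a_n}, and Herzog–Kunz generators x₁,…,x_n. Fix l ∈ ℕ and let i₀ = max{i : aᵢ ≤ l} (assume a₁ ≤ l). Then every f ∈ R can be written as f = p + g where p is a polynomial in x₁,…,x_{i₀} with coefficients in k and g ∈ R satisfies g = 0 or v(g) ≥ l + 1. -/
/-!
Fix `l`. Let `A` be the `k`-algebra generated by the `xⱼ` with `aⱼ ≤ l` and `V = A + (R ∩ t^{l+1} k[[t]])`.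
Since `V` is a `k`-subspace containing everything of order `> l`, leading-term cancellation shows
`V = R` as soon as every order `d ≤ l` of an element of `R` is the order of some element of `V`.
For `d = 0` take `1`; for `d ≥ 1`, `d ∈ v(𝔪)`, so either `d = aⱼ` and `xⱼ` works, or `d ∈ v(𝔪²)`.
In the latter case, by induction on `l` every element of `R` agrees with an element of `A` up to
order `l`, and multiplying two such approximations of elements of `𝔪` puts all of `𝔪²` into `V`.
-/

open PowerSeries

/-- The maximal ideal `𝔪 = R ∩ t·k[[t]]` of a subalgebra `R ⊆ k[[t]]`, i.e. the
elements of `R` with zero constant coefficient (equivalently, positive order). -/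
noncomputable def mIdeal {k : Type*} [Field k] (R : Subalgebra k (PowerSeries k)) : Ideal R :=
  RingHom.ker ((constantCoeff : PowerSeries k →+* k).comp R.subtype)

/-- The set of valuations `v(I)` of the nonzero elements of an ideal `I ⊆ R ⊆ k[[t]]`.
(Note `f.order = n` with `n : ℕ` forces `f ≠ 0`, since the zero series has order `⊤`.) -/
def vset {k : Type*} [Field k] {R : Subalgebra k (PowerSeries k)} (I : Ideal R) : Set ℕ :=
  {n | ∃ f ∈ I, (f : PowerSeries k).order = (n : ℕ∞)}

set_option synthInstance.maxHeartbeats 400000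

theorem PowerSeries.X_pow_dvd_iff_le_order {S : Type*} [Semiring S] {φ : S⟦X⟧} {N : ℕ} :
    X ^ N ∣ φ ↔ (N : ℕ∞) ≤ φ.order := by
  rw [order_eq_emultiplicity_X, pow_dvd_iff_le_emultiplicity]

theorem PowerSeries.succ_le_order_sub_smul {k : Type*} [Field k] {f g : k⟦X⟧} {d : ℕ}
    (hf : f.order = d) (hg : g.order = d) :
    ((d + 1 : ℕ) : ℕ∞) ≤ (f - (coeff d f / coeff d g) • g).order := by
  refine nat_le_order _ _ fun i hi => ?_
  rcases (Nat.lt_succ_iff.1 hi).lt_or_eq with hlt | rfl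
  · have hlt' : (i : ℕ∞) < d := by exact_mod_cast hlt
    simp [coeff_of_lt_order i (hf ▸ hlt'), coeff_of_lt_order i (hg ▸ hlt')]
  · simp [div_mul_cancel₀ _ (order_eq_nat.1 hg).1]

section OrderIdeal

variable {k : Type*} [Field k] (R : Subalgebra k k⟦X⟧)

noncomputable def orderIdeal (N : ℕ) : Ideal R :=
  Ideal.comap R.val (Ideal.span {X ^ N})

variable {R}

noncomputable def approxSpace (A : Subalgebra k R) (N : ℕ) : Submodule k R :=
  Subalgebra.toSubmodule A ⊔ (orderIdeal R N).restrictScalars k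

theorem mem_orderIdeal {N : ℕ} {f : R} : f ∈ orderIdeal R N ↔ (N : ℕ∞) ≤ (f : k⟦X⟧).order := by
  rw [orderIdeal, Ideal.mem_comap, Ideal.mem_span_singleton, X_pow_dvd_iff_le_order]
  rfl

theorem mIdeal_eq_orderIdeal_one : mIdeal R = orderIdeal R 1 := by
  ext f
  rw [mem_orderIdeal, Nat.cast_one, one_le_order_iff_constCoeff_eq_zero]
  simp [mIdeal]

theorem orderIdeal_mul_le (M N : ℕ) : orderIdeal R M * orderIdeal R N ≤ orderIdeal R (M + N) :=
  Ideal.mul_le.2 fun f hf g hg => mem_orderIdeal.2 <| by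
    rw [Subalgebra.coe_mul, order_mul, Nat.cast_add]
    exact add_le_add (mem_orderIdeal.1 hf) (mem_orderIdeal.1 hg)

theorem orderIdeal_antitone : Antitone (orderIdeal R) := fun _ _ hMN _ hf =>
  mem_orderIdeal.2 ((Nat.cast_le.2 hMN).trans (mem_orderIdeal.1 hf))

theorem eq_top_of_orderIdeal_le_of_orders_attained {V : Submodule k R} {N : ℕ}
    (hN : (orderIdeal R N).restrictScalars k ≤ V)
    (hV : ∀ f : R, ∀ d < N, (f : k⟦X⟧).order = d → ∃ h ∈ V, (h : k⟦X⟧).order = d) :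
    V = ⊤ := by
  -- Downward induction on the order: subtracting from `f` a multiple of an element of `V` of the
  -- same order raises the order.
  suffices key : ∀ m : ℕ, ∀ f : R, (N : ℕ∞) ≤ (f : k⟦X⟧).order + m → f ∈ V from
    eq_top_iff.2 fun f _ => key N f le_add_self
  intro m
  induction m with
  | zero => exact fun f hf => hN (mem_orderIdeal.2 (by simpa using hf))
  | succ m ih =>
    intro f hf
    by_cases hm : (N : ℕ∞) ≤ (f : k⟦X⟧).order + m
    · exact ih f hm
    obtain ⟨d, hd⟩ : ∃ d : ℕ, (f : k⟦X⟧).order = d :=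
      (ENat.ne_top_iff_exists.1 fun htop => hm (by simp [htop])).imp fun _ h => h.symm
    rw [hd] at hf hm
    norm_cast at hf hm
    obtain ⟨h, hhV, hh⟩ := hV f d (by omega) hd
    set c := coeff d (f : k⟦X⟧) / coeff d (h : k⟦X⟧)
    have hord : ((d + 1 : ℕ) : ℕ∞) ≤ ((f - c • h : R) : k⟦X⟧).order :=
      succ_le_order_sub_smul hd hh
    have hcancel : f - c • h ∈ V := ih _ <| by
      refine le_trans ?_ (add_le_add hord le_rfl)
      norm_cast
      omega
    simpa using V.add_mem hcancel (V.smul_mem c hhV)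

theorem mem_approxSpace_succ_of_mem_sq {A B : Subalgebra k R} (hAB : A ≤ B) {N : ℕ} (hN : 1 ≤ N)
    (htop : approxSpace A N = ⊤) {f : R} (hf : f ∈ mIdeal R ^ 2) :
    f ∈ approxSpace B (N + 1) := by
  rw [pow_two] at hf
  refine Submodule.mul_induction_on hf (fun u hu w hw => ?_) fun _ _ => add_mem
  obtain ⟨p, hp, g, hg, rfl⟩ := Submodule.mem_sup.1 (htop ▸ Submodule.mem_top : u ∈ approxSpace A N)
  obtain ⟨q, hq, h, hh, rfl⟩ := Submodule.mem_sup.1 (htop ▸ Submodule.mem_top : w ∈ approxSpace A N)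
  rw [mIdeal_eq_orderIdeal_one] at hu hw
  have hmul {M M' : ℕ} {r s : R} (hr : r ∈ orderIdeal R M) (hs : s ∈ orderIdeal R M')
      (hle : N + 1 ≤ M + M') : r * s ∈ orderIdeal R (N + 1) :=
    orderIdeal_antitone hle (orderIdeal_mul_le M M' (Ideal.mul_mem_mul hr hs))
  -- Each of the three error terms has order `≥ N + 1`; for `g * h` this needs `N ≥ 1`.
  have hsplit : (p + g) * (q + h) = p * q + ((p + g) * h + g * (q + h) - g * h) := by ring
  rw [hsplit]
  exact Submodule.add_mem_sup (hAB (A.mul_mem hp hq)) <| sub_mem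
    (add_mem (hmul hu hh (by omega)) (hmul hg hw (by omega))) (hmul hg hh (by omega))

theorem approxSpace_adjoin_eq_top {n : ℕ} {a : Fin n → ℕ}
    (hS : vset (mIdeal R) \ vset (mIdeal R ^ 2) ⊆ Set.range a)
    {x : Fin n → R} (hxv : ∀ i, (x i : k⟦X⟧).order = a i) (l : ℕ) :
    approxSpace (Algebra.adjoin k {y | ∃ j, a j ≤ l ∧ y = x j}) (l + 1) = ⊤ := by
  induction l using Nat.strong_induction_on with
  | _ l ih =>
  refine eq_top_of_orderIdeal_le_of_orders_attained le_sup_right fun f d hd hfd => ?_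
  rcases Nat.eq_zero_or_pos d with rfl | hd0
  · exact ⟨1, Submodule.mem_sup_left (Subalgebra.one_mem _), by simp⟩
  have hfm : f ∈ mIdeal R := by
    rw [mIdeal_eq_orderIdeal_one, mem_orderIdeal, hfd]
    exact_mod_cast hd0
  by_cases hdm : d ∈ vset (mIdeal R ^ 2)
  · obtain ⟨h, hh, hhd⟩ := hdm
    obtain ⟨l', rfl⟩ : ∃ l', l = l' + 1 := ⟨l - 1, by omega⟩
    have hmono : Algebra.adjoin k {y | ∃ j, a j ≤ l' ∧ y = x j} ≤
        Algebra.adjoin k {y | ∃ j, a j ≤ l' + 1 ∧ y = x j} :=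
      Algebra.adjoin_mono fun _ ⟨j, hj, hy⟩ => ⟨j, by omega, hy⟩
    exact ⟨h, mem_approxSpace_succ_of_mem_sq hmono (by omega) (ih l' (by omega)) hh, hhd⟩
  · obtain ⟨j, rfl⟩ := hS ⟨⟨f, hfm, hfd⟩, hdm⟩
    exact ⟨x j, Submodule.mem_sup_left (Algebra.subset_adjoin ⟨j, by omega, rfl⟩), hxv j⟩

end OrderIdeal

theorem split_polynomial_high_order_general {k : Type*} [Field k]
    (R : Subalgebra k (PowerSeries k))
    (n : ℕ) (a : Fin n → ℕ) (ha : StrictMono a)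
    (hS : vset (mIdeal R) \ vset ((mIdeal R) ^ 2) = Set.range a)
    (x : Fin n → R)
    (hxv : ∀ i, (x i : PowerSeries k).order = (a i : ℕ∞))
    (l : ℕ) (i₀ : Fin n) (hi₀l : a i₀ ≤ l) (hi₀max : ∀ j : Fin n, a j ≤ l → j ≤ i₀) :
    ∀ f : R, ∃ p g : R,
      p ∈ Algebra.adjoin k {y : R | ∃ j : Fin n, j ≤ i₀ ∧ y = x j} ∧
      f = p + g ∧
      (g = 0 ∨ ((l + 1 : ℕ) : ℕ∞) ≤ (g : PowerSeries k).order) := by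
  intro f
  have hgen : {y : R | ∃ j, a j ≤ l ∧ y = x j} = {y | ∃ j, j ≤ i₀ ∧ y = x j} := by
    ext y
    constructor
    · rintro ⟨j, hj, rfl⟩
      exact ⟨j, hi₀max j hj, rfl⟩
    · rintro ⟨j, hj, rfl⟩
      exact ⟨j, (ha.monotone hj).trans hi₀l, rfl⟩
  have hf : f ∈ approxSpace (Algebra.adjoin k {y | ∃ j, a j ≤ l ∧ y = x j}) (l + 1) := by
    rw [approxSpace_adjoin_eq_top hS.le hxv l]
    trivial
  obtain ⟨p, hp, g, hg, rfl⟩ := Submodule.mem_sup.1 hf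
  exact ⟨p, g, hgen ▸ hp, rfl, Or.inr (mem_orderIdeal.1 hg)⟩

/-- with Herzog–Kunz generators `x₁,…,x_n`, `l ∈ ℕ`, and
`i₀ = max{i : aᵢ ≤ l}` (assuming `a₁ ≤ l`), every `f ∈ R` may be written as `f = p + g`
with `p` a polynomial in `x₁,…,x_{i₀}` over `k` and `g = 0` or `v(g) ≥ l + 1`. -/
theorem split_polynomial_high_order {k : Type*} [Field k]
    (R : Subalgebra k (PowerSeries k)) (c : ℕ) (hc1 : 1 ≤ c)
    (hcond : ∀ f : PowerSeries k, (X : PowerSeries k) ^ c * f ∈ R)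
    (n : ℕ) (a : Fin n → ℕ) (ha : StrictMono a)
    (hS : vset (mIdeal R) \ vset ((mIdeal R) ^ 2) = Set.range a)
    (x : Fin n → R) (hxm : ∀ i, x i ∈ mIdeal R)
    (hxv : ∀ i, (x i : PowerSeries k).order = (a i : ℕ∞))
    (l : ℕ) (i₀ : Fin n) (hi₀l : a i₀ ≤ l) (hi₀max : ∀ j : Fin n, a j ≤ l → j ≤ i₀) :
    ∀ f : R, ∃ p g : R,
      p ∈ Algebra.adjoin k {y : R | ∃ j : Fin n, j ≤ i₀ ∧ y = x j} ∧
      f = p + g ∧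
      (g = 0 ∨ ((l + 1 : ℕ) : ℕ∞) ≤ (g : PowerSeries k).order) :=
  split_polynomial_high_order_general R n a ha hS x hxv l i₀ hi₀l hi₀max
end

section
/- Let R ⊆ k[[t]] be a k-subalgebra with conductor degree c_R (least c with t^c·k[[t]] ⊆ R), 𝔪 = R ∩ t·k[[t]], a_n = max(v(𝔪)\v(𝔪²)), and d = max{a_n + 1, c_R}. If y₁,…,y_n generate 𝔪 and ỹᵢ denotes the truncation of yᵢ at degree d (deleting all terms of order ≥ d), then each ỹᵢ ∈ R and ỹ₁,…,ỹ_n generate 𝔪. In particular, 𝔪 is generated by polynomials in t. -/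
open PowerSeries

/-! Write `𝔪 = R ∩ t·k[[t]]` and let `X^c·k[[t]] ⊆ R`. Since `R` contains `X^c·k[[t]]`, a
truncated geometric series shows that every `u ∈ R` which is a unit of `k[[t]]` is a unit of `R`,
so `𝔪` lies in the Jacobson radical of `R`. Every `f ∈ 𝔪` of order `> aₙ` lies in `𝔪²`: the
order `N` of such an `f` is a valuation of `𝔪²` by maximality of `aₙ`, so subtracting a multiple
of some `g ∈ 𝔪²` of order `N` raises the order, until the order reaches `2(c+1)` and
`f = X^(c+1) · (X^(c+1) g) ∈ 𝔪²`. The truncation error of each generator is divisible by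
`X^d`, so it lies in `𝔪²`, and Nakayama's lemma shows that the truncations still generate `𝔪`. -/

theorem Ideal.span_range_eq_of_sub_mem_sq {A ι : Type*} [CommRing A] [Finite ι] {I : Ideal A}
    (hI : I ≤ Ideal.jacobson ⊥) {y y' : ι → A} (hy : Ideal.span (Set.range y) = I)
    (hsub : ∀ i, y i - y' i ∈ I ^ 2) : Ideal.span (Set.range y') = I := by
  have hy_mem : ∀ i, y i ∈ I := fun i => hy ▸ Ideal.subset_span ⟨i, rfl⟩
  apply le_antisymm
  · rw [Ideal.span_le]
    rintro _ ⟨i, rfl⟩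
    simpa using I.sub_mem (hy_mem i) (Ideal.pow_le_self two_ne_zero (hsub i))
  · refine Submodule.le_of_le_smul_of_le_jacobson_bot
      (hy ▸ Submodule.fg_span (Set.finite_range y)) hI ?_
    conv_lhs => rw [← hy]
    rw [Ideal.span_le]
    rintro _ ⟨i, rfl⟩
    rw [← add_sub_cancel (y' i) (y i)]
    refine Submodule.add_mem _ (Submodule.mem_sup_left (Ideal.subset_span ⟨i, rfl⟩))
      (Submodule.mem_sup_right ?_)
    rw [smul_eq_mul, ← sq]
    exact hsub i

theorem PowerSeries.X_pow_dvd_sub_trunc {A : Type*} [CommRing A] (d : ℕ) (f : A⟦X⟧) :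
    X ^ d ∣ f - (trunc d f : A⟦X⟧) := by
  rw [X_pow_dvd_iff]
  intro m hm
  rw [map_sub, Polynomial.coeff_coe, coeff_trunc, if_pos hm, sub_self]

section Conductor

variable {k : Type*} [Field k] {R : Subalgebra k k⟦X⟧} {c : ℕ}

theorem mem_mIdeal_iff {f : R} : f ∈ mIdeal R ↔ constantCoeff (f : k⟦X⟧) = 0 := Iff.rfl

theorem coe_trunc_mem (hcond : ∀ f : k⟦X⟧, X ^ c * f ∈ R) {d : ℕ} (hcd : c ≤ d) {f : k⟦X⟧}
    (hf : f ∈ R) : (trunc d f : k⟦X⟧) ∈ R := by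
  obtain ⟨g, hg⟩ := (pow_dvd_pow (X : k⟦X⟧) hcd).trans (X_pow_dvd_sub_trunc d f)
  rw [← sub_sub_cancel f (trunc d f : k⟦X⟧), hg]
  exact sub_mem hf (hcond g)

theorem inv_mem_of_constantCoeff_ne_zero (hcond : ∀ f : k⟦X⟧, X ^ c * f ∈ R) {u : k⟦X⟧}
    (hu : u ∈ R) (hu0 : constantCoeff u ≠ 0) : u⁻¹ ∈ R := by
  set a := constantCoeff u
  set w := 1 - C a⁻¹ * u
  obtain ⟨h, hh⟩ : X ∣ w := X_dvd_iff.mpr (by simp [w, a, hu0])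
  have hwR : w ∈ R := sub_mem (one_mem _) (mul_mem (algebraMap_mem R a⁻¹) hu)
  have hgeom : C a⁻¹ * u * ∑ j ∈ Finset.range c, w ^ j + w ^ c = 1 := by
    rw [show C a⁻¹ * u = 1 - w by ring, mul_neg_geom_sum, sub_add_cancel]
  have hinv : u⁻¹ = C a⁻¹ * ∑ j ∈ Finset.range c, w ^ j + X ^ c * (h ^ c * u⁻¹) :=
    calc u⁻¹ = u⁻¹ * (C a⁻¹ * u * ∑ j ∈ Finset.range c, w ^ j + w ^ c) := by rw [hgeom, mul_one]
      _ = u⁻¹ * u * (C a⁻¹ * ∑ j ∈ Finset.range c, w ^ j) + X ^ c * (h ^ c * u⁻¹) := by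
        rw [hh]; ring
      _ = _ := by rw [PowerSeries.inv_mul_cancel u hu0, one_mul]
  rw [hinv]
  exact add_mem (mul_mem (algebraMap_mem R a⁻¹) (sum_mem fun j _ => pow_mem hwR j)) (hcond _)

theorem mIdeal_le_jacobson_bot (hcond : ∀ f : k⟦X⟧, X ^ c * f ∈ R) :
    mIdeal R ≤ Ideal.jacobson ⊥ := by
  intro x hx
  rw [Ideal.mem_jacobson_bot]
  intro r
  have h1 : constantCoeff ((x * r + 1 : R) : k⟦X⟧) ≠ 0 := by
    simp [mem_mIdeal_iff.mp hx]
  exact IsUnit.of_mul_eq_one ⟨_, inv_mem_of_constantCoeff_ne_zero hcond (x * r + 1).2 h1⟩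
    (Subtype.ext (PowerSeries.mul_inv_cancel _ h1))

theorem mem_mIdeal_sq_of_X_pow_two_mul_dvd (hcond : ∀ f : k⟦X⟧, X ^ c * f ∈ R) {f : R}
    (hf : X ^ (2 * (c + 1)) ∣ (f : k⟦X⟧)) : f ∈ mIdeal R ^ 2 := by
  obtain ⟨g, hg⟩ := hf
  have hmem : ∀ g : k⟦X⟧, X ^ (c + 1) * g ∈ R := fun g => by
    simpa [pow_succ, mul_assoc] using hcond (X * g)
  let u : R := ⟨X ^ (c + 1), by simpa using hmem 1⟩
  let w : R := ⟨X ^ (c + 1) * g, hmem g⟩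
  have hu : u ∈ mIdeal R := mem_mIdeal_iff.mpr (by simp [u])
  have hw : w ∈ mIdeal R := mem_mIdeal_iff.mpr (by simp [w])
  have hfuw : f = u * w := Subtype.ext (by simp only [hg, u, w, MulMemClass.coe_mul]; ring)
  rw [hfuw, sq]
  exact Ideal.mul_mem_mul hu hw

theorem mem_mIdeal_sq_of_X_pow_dvd_of_X_pow_succ_dvd {aₙ : ℕ}
    (han : IsGreatest (vset (mIdeal R) \ vset (mIdeal R ^ 2)) aₙ) {N : ℕ} (hN : aₙ < N)
    (hsucc : ∀ f : R, X ^ (N + 1) ∣ (f : k⟦X⟧) → f ∈ mIdeal R ^ 2) {f : R}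
    (hf : X ^ N ∣ (f : k⟦X⟧)) : f ∈ mIdeal R ^ 2 := by
  have hlow := X_pow_dvd_iff.mp hf
  by_cases hα : coeff N (f : k⟦X⟧) = 0
  · refine hsucc f (X_pow_dvd_iff.mpr fun i hi => ?_)
    rcases Nat.lt_succ_iff_lt_or_eq.mp hi with hi | rfl
    exacts [hlow i hi, hα]
  have hfm : f ∈ mIdeal R := mem_mIdeal_iff.mpr (by simpa using hlow 0 (by omega))
  obtain ⟨g, hg, hgN⟩ : N ∈ vset (mIdeal R ^ 2) := by
    by_contra hN2
    have := han.2 ⟨⟨f, hfm, order_eq_nat.mpr ⟨hα, hlow⟩⟩, hN2⟩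
    omega
  obtain ⟨hβ, hglow⟩ := order_eq_nat.mp hgN
  set s : R := algebraMap k R (coeff N (f : k⟦X⟧) / coeff N (g : k⟦X⟧))
  have hsub : X ^ (N + 1) ∣ ((f - s * g : R) : k⟦X⟧) := by
    rw [X_pow_dvd_iff]
    intro i hi
    simp only [s, Subalgebra.coe_sub, MulMemClass.coe_mul, Subalgebra.coe_algebraMap,
      ← C_eq_algebraMap, map_sub, coeff_C_mul]
    rcases Nat.lt_succ_iff_lt_or_eq.mp hi with hi | rfl
    · simp [hlow i hi, hglow i hi]
    · field_simp
      ring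
  rw [← sub_add_cancel f (s * g)]
  exact add_mem (hsucc _ hsub) (Ideal.mul_mem_left _ _ hg)

theorem mem_mIdeal_sq_of_X_pow_dvd (hcond : ∀ f : k⟦X⟧, X ^ c * f ∈ R) {aₙ : ℕ}
    (han : IsGreatest (vset (mIdeal R) \ vset (mIdeal R ^ 2)) aₙ) {f : R}
    (hf : X ^ (aₙ + 1) ∣ (f : k⟦X⟧)) : f ∈ mIdeal R ^ 2 := by
  suffices h : ∀ j N, 2 * (c + 1) ≤ N + j → aₙ < N →
      ∀ f : R, X ^ N ∣ (f : k⟦X⟧) → f ∈ mIdeal R ^ 2 from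
    h (2 * (c + 1)) (aₙ + 1) (by omega) (by omega) f hf
  intro j
  induction j with
  | zero =>
    intro N hN _ f hf
    exact mem_mIdeal_sq_of_X_pow_two_mul_dvd hcond ((pow_dvd_pow X hN).trans hf)
  | succ j ih =>
    intro N hN haN f hf
    exact mem_mIdeal_sq_of_X_pow_dvd_of_X_pow_succ_dvd han haN
      (ih (N + 1) (by omega) (by omega)) hf

end Conductor

theorem truncated_generators_general {k : Type*} [Field k]
    (R : Subalgebra k (PowerSeries k)) (c : ℕ)
    (hcond : ∀ f : PowerSeries k, (X : PowerSeries k) ^ c * f ∈ R)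
    (aₙ : ℕ) (han : IsGreatest (vset (mIdeal R) \ vset ((mIdeal R) ^ 2)) aₙ)
    (d : ℕ) (hd : d = max (aₙ + 1) c)
    (n : ℕ) (y : Fin n → R) (hy : Ideal.span (Set.range y) = mIdeal R) :
    ∃ ty : Fin n → R,
      (∀ i, (ty i : PowerSeries k) = ((trunc d (y i : PowerSeries k) : Polynomial k) :
        PowerSeries k)) ∧
      Ideal.span (Set.range ty) = mIdeal R := by
  have hcd : c ≤ d := hd ▸ le_max_right _ _
  have had : aₙ + 1 ≤ d := hd ▸ le_max_left _ _
  let ty : Fin n → R := fun i => ⟨_, coe_trunc_mem hcond hcd (y i).2⟩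
  refine ⟨ty, fun i => rfl,
    Ideal.span_range_eq_of_sub_mem_sq (mIdeal_le_jacobson_bot hcond) hy fun i => ?_⟩
  exact mem_mIdeal_sq_of_X_pow_dvd hcond han
    ((pow_dvd_pow X had).trans (X_pow_dvd_sub_trunc d (y i : k⟦X⟧)))

/-- with conductor degree `c_R`, `a_n = max(v(𝔪)\v(𝔪²))` and
`d = max{a_n+1, c_R}`: if `y₁,…,y_n` generate `𝔪`, then the truncations of the `yᵢ`
at degree `d` (polynomials in `t`) lie in `R` and again generate `𝔪`. -/
theorem truncated_generators {k : Type*} [Field k]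
    (R : Subalgebra k (PowerSeries k)) (c : ℕ) (hc1 : 1 ≤ c)
    (hcond : ∀ f : PowerSeries k, (X : PowerSeries k) ^ c * f ∈ R)
    (hleast : ∀ c' : ℕ, (∀ f : PowerSeries k, (X : PowerSeries k) ^ c' * f ∈ R) → c ≤ c')
    (aₙ : ℕ) (han : IsGreatest (vset (mIdeal R) \ vset ((mIdeal R) ^ 2)) aₙ)
    (d : ℕ) (hd : d = max (aₙ + 1) c)
    (n : ℕ) (y : Fin n → R) (hy : Ideal.span (Set.range y) = mIdeal R) :
    ∃ ty : Fin n → R,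
      (∀ i, (ty i : PowerSeries k) = ((trunc d (y i : PowerSeries k) : Polynomial k) :
        PowerSeries k)) ∧
      Ideal.span (Set.range ty) = mIdeal R :=
  truncated_generators_general R c hcond aₙ han d hd n y hy
end
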